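/- Define recursively a₀ := {∅} and aₙ₊₁ := {∅, aₙ}. Let Y and Z be sets such that {∅} ⊗ ({∅} ∪ Y) = Z and Y ⊊ Z (⊗ the unordered Cartesian product). Then there exists k ∈ ω such that Y = { aₗ : ℓ < k } and Z = { aₗ : ℓ ≤ k }. -/
import Mathlib


/-- Unordered Cartesian product: `A ⊗ B = { {a,b} : a ∈ A, b ∈ B }`. -/
def ZFSet.uprod (A B : ZFSet) : ZFSet :=
  ZFSet.sep (fun z => ∃ a ∈ A, ∃ b ∈ B, z = {a, b}) (ZFSet.powerset (A ∪ B))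

/-- The sequence `a₀ = {∅}`, `aₙ₊₁ = {∅, aₙ}`. -/
def aseq : ℕ → ZFSet
  | 0 => {∅}
  | n + 1 => {∅, aseq n}

lemma empty_mem_aseq (n : ℕ) : (∅ : ZFSet) ∈ aseq n := by
  cases n <;> simp [aseq]

lemma aseq_ne_empty (n : ℕ) : aseq n ≠ ∅ := by
  intro h
  have := empty_mem_aseq n
  rw [h] at this
  exact ZFSet.notMem_empty _ this

lemma pair_inj {b b' : ZFSet} (h : ({∅, b} : ZFSet) = {∅, b'}) : b = b' := by
  have hb : b = ∅ ∨ b = b' := by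
    have : b ∈ ({∅, b'} : ZFSet) := h ▸ (by simp)
    simpa using this
  have hb' : b' = ∅ ∨ b' = b := by
    have : b' ∈ ({∅, b} : ZFSet) := h ▸ (by simp)
    simpa using this
  rcases hb with hb | hb
  · rcases hb' with hb' | hb'
    · rw [hb, hb']
    · exact hb'.symm
  · exact hb

lemma aseq_inj : Function.Injective aseq := by
  intro n
  induction n with
  | zero =>
    intro m h
    cases m with
    | zero => rfl
    | succ m =>
      exfalso
      have : aseq m ∈ ({∅} : ZFSet) := by
        rw [show ({∅} : ZFSet) = aseq 0 from rfl, h, aseq]; simp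
      exact aseq_ne_empty m (by simpa using this)
  | succ n ih =>
    intro m h
    cases m with
    | zero =>
      exfalso
      have : aseq n ∈ ({∅} : ZFSet) := by
        rw [show ({∅} : ZFSet) = aseq 0 from rfl, ← h, aseq]; simp
      exact aseq_ne_empty n (by simpa using this)
    | succ m =>
      have : aseq n = aseq m := pair_inj (by simpa [aseq] using h)
      rw [ih this]

theorem stmt_2 (Y Z : ZFSet)
    (h₁ : ZFSet.uprod {∅} ({∅} ∪ Y) = Z)
    (h₂ : Y ⊆ Z) (h₃ : Y ≠ Z) :
    ∃ k : ℕ, (∀ t : ZFSet, t ∈ Y ↔ ∃ l < k, t = aseq l) ∧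
      (∀ t : ZFSet, t ∈ Z ↔ ∃ l ≤ k, t = aseq l) := by
  classical
  -- characterize membership in Z
  have hZ : ∀ z : ZFSet, z ∈ Z ↔ ∃ b, (b = ∅ ∨ b ∈ Y) ∧ z = {∅, b} := by
    intro z
    rw [← h₁]
    constructor
    · intro hz
      rw [ZFSet.uprod, ZFSet.mem_sep] at hz
      obtain ⟨-, a, ha, b, hb, rfl⟩ := hz
      rw [ZFSet.mem_singleton] at ha
      rw [ZFSet.mem_union, ZFSet.mem_singleton] at hb
      exact ⟨b, hb, by rw [ha]⟩
    · rintro ⟨b, hb, rfl⟩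
      rw [ZFSet.uprod, ZFSet.mem_sep]
      refine ⟨?_, ∅, by simp, b, ?_, rfl⟩
      · rw [ZFSet.mem_powerset]
        intro x hx
        rw [ZFSet.mem_insert_iff, ZFSet.mem_singleton] at hx
        simp only [ZFSet.mem_union, ZFSet.mem_singleton]
        rcases hx with rfl | rfl
        · exact Or.inl rfl
        · rcases hb with rfl | hb
          · exact Or.inl rfl
          · exact Or.inr (Or.inr hb)
      · simp only [ZFSet.mem_union, ZFSet.mem_singleton]
        exact hb
  -- every element of Y is some aseq n
  have hYa : ∀ y : ZFSet, y ∈ Y → ∃ n, y = aseq n := by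
    intro y
    induction y using ZFSet.inductionOn with
    | _ y ih =>
      intro hy
      obtain ⟨b, hb, rfl⟩ := (hZ _).mp (h₂ hy)
      rcases hb with rfl | hb
      · exact ⟨0, by ext; simp [aseq]⟩
      · obtain ⟨n, rfl⟩ := ih b (by simp) hb
        exact ⟨n + 1, rfl⟩
  -- downward closure for Y indices
  have hdown : ∀ n : ℕ, aseq (n + 1) ∈ Y → aseq n ∈ Y := by
    intro n h
    obtain ⟨b, hb, heq⟩ := (hZ _).mp (h₂ h)
    have hbn : aseq n = b := pair_inj (by simpa [aseq] using heq)
    rcases hb with rfl | hb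
    · exact absurd hbn (aseq_ne_empty n)
    · rwa [hbn]
  have hdown' : ∀ n m : ℕ, m ≤ n → aseq n ∈ Y → aseq m ∈ Y := by
    intro n
    induction n with
    | zero => intro m hm h; rw [Nat.le_zero.mp hm]; exact h
    | succ n ih =>
      intro m hm h
      rcases Nat.eq_or_lt_of_le hm with rfl | hm
      · exact h
      · exact ih m (Nat.lt_succ_iff.mp hm) (hdown n h)
  -- there is some n with aseq n ∉ Y
  have hex : ∃ n, aseq n ∉ Y := by
    by_contra hall
    push_neg at hall
    apply h₃
    apply ZFSet.ext
    intro z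
    constructor
    · exact fun h => h₂ h
    · intro hz
      obtain ⟨b, hb, rfl⟩ := (hZ _).mp hz
      rcases hb with rfl | hb
      · have : ({∅, ∅} : ZFSet) = aseq 0 := by ext; simp [aseq]
        rw [this]; exact hall 0
      · obtain ⟨n, rfl⟩ := hYa b hb
        exact hall (n + 1)
  refine ⟨Nat.find hex, ?_, ?_⟩
  · intro t
    constructor
    · intro ht
      obtain ⟨n, rfl⟩ := hYa t ht
      refine ⟨n, ?_, rfl⟩
      by_contra hn
      push_neg at hn
      exact Nat.find_spec hex (hdown' n _ hn ht)
    · rintro ⟨l, hl, rfl⟩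
      by_contra h
      exact Nat.find_min hex hl h
  · intro t
    constructor
    · intro ht
      obtain ⟨b, hb, rfl⟩ := (hZ _).mp ht
      rcases hb with rfl | hb
      · refine ⟨0, Nat.zero_le _, by ext; simp [aseq]⟩
      · obtain ⟨n, rfl⟩ := hYa b hb
        refine ⟨n + 1, ?_, rfl⟩
        by_contra hn
        push_neg at hn
        exact Nat.find_spec hex (hdown' n _ (Nat.lt_succ_iff.mp hn) hb)
    · rintro ⟨l, hl, rfl⟩
      cases l with
      | zero =>
        apply (hZ _).mpr
        exact ⟨∅, Or.inl rfl, by ext; simp [aseq]⟩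
      | succ l =>
        apply (hZ _).mpr
        refine ⟨aseq l, Or.inr ?_, rfl⟩
        have hlY : aseq l ∈ Y := by
          by_contra h
          exact Nat.find_min hex (Nat.lt_of_succ_le hl) h
        exact hlY
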